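/- Let U be a finite set, κ : U × U → ℝ with κ ≥ 0 and κ symmetric, and d : U × U → ℝ with d ≥ 0, d symmetric, d(i,i) = 0, and d(i,k) ≤ d(i,j) + d(j,k) for all i,j,k ∈ U. Fix i ∈ U and c₀ ≥ 0, and for r ∈ ℝ define B(r) = { j ∈ U : d(i,j) < r } and vol(r) = c₀ + Σ_{{j,k} ⊆ B(r)} κ(j,k) d(j,k) + Σ_{j ∈ B(r), k ∈ U∖B(r)} κ(j,k)(r − d(i,j)). Then vol is monotone nondecreasing: for all 0 ≤ r ≤ r', vol(r) ≤ vol(r'). -/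
import Mathlib


open scoped Classical

/-- The open ball of radius `r` around `i` with respect to `d`, inside the finite set `U`. -/
noncomputable def openBall {U : Type*} [Fintype U] (d : U → U → ℝ) (i : U) (r : ℝ) :
    Finset U :=
  Finset.univ.filter fun j : U => d i j < r

/-- The volume of the open ball of radius `r` around `i`: a constant `c₀`, plus the
`κ`-weighted `d`-length of the (unordered) pairs inside the ball, plus the partial
lengths `κ j k * (r - d i j)` of the pairs crossing the boundary of the ball.
(Since `κ` and `d` are symmetric and `d` vanishes on the diagonal, the sum over
unordered pairs inside the ball equals half the sum over ordered pairs.) -/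
noncomputable def ballVol {U : Type*} [Fintype U] (κ d : U → U → ℝ) (i : U)
    (c₀ r : ℝ) : ℝ :=
  c₀ + (∑ j ∈ openBall d i r, ∑ k ∈ openBall d i r, κ j k * d j k) / 2 +
    ∑ j ∈ openBall d i r, ∑ k ∈ (openBall d i r)ᶜ, κ j k * (r - d i j)

noncomputable def gAux {U : Type*} (κ d : U → U → ℝ) (i : U) (r : ℝ) (j k : U) : ℝ :=
  if d i j < r then (if d i k < r then κ j k * d j k / 2 else κ j k * (r - d i j)) else 0

lemma ballVol_eq {U : Type*} [Fintype U] (κ d : U → U → ℝ) (i : U) (c₀ r : ℝ) :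
    ballVol κ d i c₀ r = c₀ + ∑ j : U, ∑ k : U, gAux κ d i r j k := by
  have hmem : ∀ j, j ∈ openBall d i r ↔ d i j < r := by
    intro j; simp [openBall]
  rw [← Finset.sum_add_sum_compl (openBall d i r) (fun j => ∑ k, gAux κ d i r j k)]
  have h0 : ∑ j ∈ (openBall d i r)ᶜ, ∑ k, gAux κ d i r j k = 0 := by
    refine Finset.sum_eq_zero fun j hj => Finset.sum_eq_zero fun k _ => ?_
    have : ¬ d i j < r := by simpa [hmem] using hj
    simp [gAux, this]
  have h1 : ∀ j ∈ openBall d i r, ∑ k, gAux κ d i r j k =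
      ∑ k ∈ openBall d i r, κ j k * d j k / 2 +
        ∑ k ∈ (openBall d i r)ᶜ, κ j k * (r - d i j) := by
    intro j hj
    have hjr : d i j < r := (hmem j).mp hj
    rw [← Finset.sum_add_sum_compl (openBall d i r) (fun k => gAux κ d i r j k)]
    congr 1
    · refine Finset.sum_congr rfl fun k hk => ?_
      have : d i k < r := (hmem k).mp hk
      simp [gAux, hjr, this]
    · refine Finset.sum_congr rfl fun k hk => ?_
      have : ¬ d i k < r := by simpa [hmem] using hk
      simp [gAux, hjr, this]
  rw [Finset.sum_congr rfl h1, h0, Finset.sum_add_distrib, ballVol, Finset.sum_div]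
  have : ∀ j ∈ openBall d i r, (∑ k ∈ openBall d i r, κ j k * d j k) / 2 =
      ∑ k ∈ openBall d i r, κ j k * d j k / 2 := fun j _ => Finset.sum_div _ _ _
  rw [Finset.sum_congr rfl this]
  ring

lemma g_pair_mono {U : Type*} (κ : U → U → ℝ) (hκ0 : ∀ j k : U, 0 ≤ κ j k)
    (hκs : ∀ j k : U, κ j k = κ k j)
    (d : U → U → ℝ) (hd0 : ∀ j k : U, 0 ≤ d j k) (hds : ∀ j k : U, d j k = d k j)
    (hdt : ∀ i j k : U, d i k ≤ d i j + d j k)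
    (i : U) (r r' : ℝ) (hrr : r ≤ r') (j k : U) :
    gAux κ d i r j k + gAux κ d i r k j ≤ gAux κ d i r' j k + gAux κ d i r' k j := by
  have hκ := hκ0 j k
  have hκ' := hκs j k
  have hdjk := hd0 j k
  have hdsjk := hds j k
  have t1 := hdt i j k
  have t2 := hdt i k j
  unfold gAux
  split_ifs <;>
    nlinarith [mul_nonneg hκ hdjk, hd0 i j, hd0 i k, hκ, t1, t2]

/-- The volume of the ball is monotone nondecreasing in the radius. -/
theorem statement9 {U : Type*} [Fintype U] [DecidableEq U]
    (κ : U → U → ℝ) (hκ0 : ∀ j k : U, 0 ≤ κ j k) (hκs : ∀ j k : U, κ j k = κ k j)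
    (d : U → U → ℝ) (hd0 : ∀ j k : U, 0 ≤ d j k) (hds : ∀ j k : U, d j k = d k j)
    (hdd : ∀ j : U, d j j = 0) (hdt : ∀ i j k : U, d i k ≤ d i j + d j k)
    (i : U) (c₀ : ℝ) (hc₀ : 0 ≤ c₀) :
    ∀ r r' : ℝ, 0 ≤ r → r ≤ r' → ballVol κ d i c₀ r ≤ ballVol κ d i c₀ r' := by
  intro r r' hr hrr
  rw [ballVol_eq, ballVol_eq]
  have key : ∀ ρ : ℝ, 2 * ∑ j : U, ∑ k : U, gAux κ d i ρ j k =
      ∑ j : U, ∑ k : U, (gAux κ d i ρ j k + gAux κ d i ρ k j) := by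
    intro ρ
    have h1 : ∑ j : U, ∑ k : U, gAux κ d i ρ k j = ∑ j : U, ∑ k : U, gAux κ d i ρ j k :=
      Finset.sum_comm
    simp only [Finset.sum_add_distrib, h1]
    ring
  have h2 : ∑ j : U, ∑ k : U, (gAux κ d i r j k + gAux κ d i r k j) ≤
      ∑ j : U, ∑ k : U, (gAux κ d i r' j k + gAux κ d i r' k j) := by
    refine Finset.sum_le_sum fun j _ => Finset.sum_le_sum fun k _ => ?_
    exact g_pair_mono κ hκ0 hκs d hd0 hds hdt i r r' hrr j k
  have := key r
  have := key r'
  linarith
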